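/- arXiv:1403.2330 — 3 statements merged into one kernel-verified Lean document; each statement's English description precedes it below -/
import Mathlib

section
/- For any block-partitioned matrix X = [[A, B], [C, D]] where A and D are square, the nuclear norm satisfies ‖X‖₊ ≥ ‖[[A,0],[0,D]]‖₊ = ‖A‖₊ + ‖D‖₊. -/
/-!
The nuclear norm is dual to the operator norm: `tr (Wᴴ X) ≤ ‖X‖₊` for every contraction `W`
(Cauchy–Schwarz on the columns of `X V` and `W V`, where `V` diagonalises `Xᴴ X`), with equality
for an orthogonal `W` that sends the singular directions of `X` to its left singular vectors.
For `X = [[A, B], [C, D]]`, testing against the orthogonal `diag (W_A, W_D)` built from optimal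
matrices for `A` and `D` only sees the diagonal blocks, so `‖A‖₊ + ‖D‖₊ ≤ ‖X‖₊`. Conversely the
diagonal blocks of a contraction are contractions, and pairing one with `diag (A, D)` again only
sees `A` and `D`; this gives `‖diag (A, D)‖₊ ≤ ‖A‖₊ + ‖D‖₊`.
-/

open Matrix BigOperators

/-- Nuclear norm: sum of singular values (square roots of eigenvalues of AᴴA). -/
noncomputable def nuclearNorm {m n : Type*} [Fintype m] [Fintype n] [DecidableEq n]
    (A : Matrix m n ℝ) : ℝ :=
  ∑ i, Real.sqrt ((Matrix.isHermitian_conjTranspose_mul_self A).eigenvalues i)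

/-- Squared Frobenius norm. -/
def frobSq {m n : Type*} [Fintype m] [Fintype n] (A : Matrix m n ℝ) : ℝ :=
  ∑ i, ∑ j, (A i j) ^ 2

/-- Frobenius norm. -/
noncomputable def frobNorm {m n : Type*} [Fintype m] [Fintype n] (A : Matrix m n ℝ) : ℝ :=
  Real.sqrt (frobSq A)

open WithLp
open scoped InnerProductSpace

lemma exists_orthonormalBasis_inner_eq_norm {ι E : Type*} [Fintype ι] [NormedAddCommGroup E]
    [InnerProductSpace ℝ E] [FiniteDimensional ℝ E]
    (hcard : Module.finrank ℝ E = Fintype.card ι)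
    (c : ι → E) (hc : Pairwise fun i j => ⟪c i, c j⟫_ℝ = 0) :
    ∃ b : OrthonormalBasis ι ℝ E, ∀ i, ⟪b i, c i⟫_ℝ = ‖c i‖ := by
  let v i := ‖c i‖⁻¹ • c i
  have hv : Orthonormal ℝ ({i | c i ≠ 0}.domRestrict v) := by
    refine ⟨fun i => norm_smul_inv_norm i.2, fun i j hij => ?_⟩
    simp only [Set.domRestrict_apply, v, real_inner_smul_left, real_inner_smul_right,
      hc (Subtype.coe_ne_coe.mpr hij), mul_zero]
  obtain ⟨b, hb⟩ := hv.exists_orthonormalBasis_extension_of_card_eq hcard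
  refine ⟨b, fun i => ?_⟩
  by_cases hci : c i = 0
  · simp [hci]
  · rw [hb i hci, real_inner_smul_left, real_inner_self_eq_norm_sq]
    field_simp

section Columns

variable {m n : Type*} [Fintype m]

lemma conjTranspose_mul_apply_eq_inner_col (V M : Matrix m n ℝ) (i j : n) :
    (Vᴴ * M) i j = ⟪toLp 2 (V.col i), toLp 2 (M.col j)⟫_ℝ := by
  simp [EuclideanSpace.inner_toLp_toLp, mul_apply, dotProduct, mul_comm]

lemma norm_toLp_col (M : Matrix m n ℝ) (i : n) :
    ‖toLp 2 (M.col i)‖ = √((Mᴴ * M) i i) := by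
  rw [norm_eq_sqrt_real_inner, conjTranspose_mul_apply_eq_inner_col]

lemma trace_conjTranspose_mul_eq_sum_inner_col [Fintype n] (V M : Matrix m n ℝ) :
    (Vᴴ * M).trace = ∑ i, ⟪toLp 2 (V.col i), toLp 2 (M.col i)⟫_ℝ := by
  simp only [trace, diag, conjTranspose_mul_apply_eq_inner_col]

end Columns

section SingularVectors

variable {m n : Type*} [Fintype m] [Fintype n] [DecidableEq n]

noncomputable def rightSingularVectors (X : Matrix m n ℝ) : Matrix n n ℝ :=
  (isHermitian_conjTranspose_mul_self X).eigenvectorUnitary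

lemma rightSingularVectors_mul_conjTranspose (X : Matrix m n ℝ) :
    rightSingularVectors X * (rightSingularVectors X)ᴴ = 1 :=
  mem_unitaryGroup_iff.mp (SetLike.coe_mem _)

lemma conjTranspose_mul_rightSingularVectors (X : Matrix m n ℝ) :
    (rightSingularVectors X)ᴴ * rightSingularVectors X = 1 :=
  mem_unitaryGroup_iff'.mp (SetLike.coe_mem _)

lemma gram_mul_rightSingularVectors_eq_diagonal (X : Matrix m n ℝ) :
    (X * rightSingularVectors X)ᴴ * (X * rightSingularVectors X) =
      diagonal (isHermitian_conjTranspose_mul_self X).eigenvalues := by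
  have := (isHermitian_conjTranspose_mul_self X).conjStarAlgAut_star_eigenvectorUnitary
  rw [Unitary.conjStarAlgAut_apply] at this
  simpa [rightSingularVectors, conjTranspose_mul, star_eq_conjTranspose, Matrix.mul_assoc]
    using this

lemma nuclearNorm_eq_sum_norm_col (X : Matrix m n ℝ) :
    nuclearNorm X = ∑ i, ‖toLp 2 ((X * rightSingularVectors X).col i)‖ := by
  simp only [norm_toLp_col, gram_mul_rightSingularVectors_eq_diagonal, diagonal_apply_eq,
    nuclearNorm]

lemma inner_col_mul_rightSingularVectors_eq_zero (X : Matrix m n ℝ) :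
    Pairwise fun i j => ⟪toLp 2 ((X * rightSingularVectors X).col i),
      toLp 2 ((X * rightSingularVectors X).col j)⟫_ℝ = 0 := fun i j hij => by
  dsimp only
  rw [← conjTranspose_mul_apply_eq_inner_col, gram_mul_rightSingularVectors_eq_diagonal,
    diagonal_apply_ne _ hij]

end SingularVectors

section NuclearNormDuality

variable {m n : Type*} [Fintype m] [Fintype n] [DecidableEq n]

lemma trace_conjTranspose_mul_le_nuclearNorm (X W : Matrix m n ℝ)
    (hW : (1 - Wᴴ * W).PosSemidef) : (Wᴴ * X).trace ≤ nuclearNorm X := by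
  set V := rightSingularVectors X
  have htrace : ((W * V)ᴴ * (X * V)).trace = (Wᴴ * X).trace := by
    rw [conjTranspose_mul, Matrix.mul_assoc, trace_mul_comm, Matrix.mul_assoc,
      Matrix.mul_assoc, rightSingularVectors_mul_conjTranspose, Matrix.mul_one]
  have hWV : ∀ i, ‖toLp 2 ((W * V).col i)‖ ≤ 1 := by
    have hpsd : (1 - (W * V)ᴴ * (W * V)).PosSemidef := by
      convert hW.conjTranspose_mul_mul_same V using 1
      rw [conjTranspose_mul, Matrix.mul_sub, Matrix.sub_mul, Matrix.mul_one,
        conjTranspose_mul_rightSingularVectors]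
      simp only [Matrix.mul_assoc]
    intro i
    have := hpsd.diag_nonneg (i := i)
    rw [Matrix.sub_apply, one_apply_eq, sub_nonneg] at this
    rwa [norm_toLp_col, Real.sqrt_le_one]
  rw [← htrace, trace_conjTranspose_mul_eq_sum_inner_col, nuclearNorm_eq_sum_norm_col]
  gcongr with i
  calc _ ≤ ‖toLp 2 ((W * V).col i)‖ * ‖toLp 2 ((X * V).col i)‖ := real_inner_le_norm _ _
    _ ≤ ‖toLp 2 ((X * V).col i)‖ := mul_le_of_le_one_left (norm_nonneg _) (hWV i)

lemma exists_orthogonal_trace_eq_nuclearNorm (X : Matrix n n ℝ) :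
    ∃ W : Matrix n n ℝ, Wᴴ * W = 1 ∧ (Wᴴ * X).trace = nuclearNorm X := by
  set V := rightSingularVectors X
  -- The columns of `N` are the normalised columns of `X * V` (left singular vectors),
  -- completed to an orthonormal basis.
  obtain ⟨b, hb⟩ := exists_orthonormalBasis_inner_eq_norm (by simp)
    (fun i => toLp 2 ((X * V).col i)) (inner_col_mul_rightSingularVectors_eq_zero X)
  set N := (EuclideanSpace.basisFun n ℝ).toBasis.toMatrix b.toBasis
  have hN : Nᴴ * N = 1 := mem_unitaryGroup_iff'.mp
    ((EuclideanSpace.basisFun n ℝ).toMatrix_orthonormalBasis_mem_unitary b)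
  have hNcol : ∀ i, toLp 2 (N.col i) = b i := fun i => by ext k; rfl
  refine ⟨N * Vᴴ, ?_, ?_⟩
  · rw [conjTranspose_mul, conjTranspose_conjTranspose, Matrix.mul_assoc,
      ← Matrix.mul_assoc Nᴴ, hN, Matrix.one_mul, rightSingularVectors_mul_conjTranspose]
  · rw [conjTranspose_mul, conjTranspose_conjTranspose, Matrix.mul_assoc,
      trace_mul_comm, Matrix.mul_assoc, trace_conjTranspose_mul_eq_sum_inner_col,
      nuclearNorm_eq_sum_norm_col]
    simp only [hNcol, hb, V]

end NuclearNormDuality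

section Blocks

variable {l m n o : Type*} [Fintype n] [Fintype o]

lemma trace_fromBlocks_conjTranspose_mul_fromBlocks [Fintype l] [Fintype m]
    (E : Matrix n l ℝ) (F : Matrix n m ℝ) (G : Matrix o l ℝ) (H : Matrix o m ℝ)
    (A : Matrix n l ℝ) (B : Matrix n m ℝ) (C : Matrix o l ℝ) (D : Matrix o m ℝ) :
    ((fromBlocks E F G H)ᴴ * fromBlocks A B C D).trace =
      (Eᴴ * A).trace + (Gᴴ * C).trace + ((Fᴴ * B).trace + (Hᴴ * D).trace) := by
  rw [fromBlocks_conjTranspose, fromBlocks_multiply]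
  simp only [trace, diag, Fintype.sum_sum_type, fromBlocks_apply₁₁, fromBlocks_apply₂₂,
    Matrix.add_apply, Finset.sum_add_distrib]

variable [DecidableEq l] [DecidableEq m] {W : Matrix (n ⊕ o) (l ⊕ m) ℝ}

lemma Matrix.PosSemidef.one_sub_conjTranspose_mul_toBlocks₁₁ [Fintype l]
    (hW : (1 - Wᴴ * W).PosSemidef) :
    (1 - W.toBlocks₁₁ᴴ * W.toBlocks₁₁).PosSemidef := by
  have : 1 - W.toBlocks₁₁ᴴ * W.toBlocks₁₁ =
      (1 - Wᴴ * W).submatrix Sum.inl Sum.inl + W.toBlocks₂₁ᴴ * W.toBlocks₂₁ := by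
    ext i j
    simp [mul_apply, Fintype.sum_sum_type, toBlocks₁₁, toBlocks₂₁, one_apply]
    ring
  rw [this]
  exact (hW.submatrix _).add (posSemidef_conjTranspose_mul_self _)

lemma Matrix.PosSemidef.one_sub_conjTranspose_mul_toBlocks₂₂ [Fintype m]
    (hW : (1 - Wᴴ * W).PosSemidef) :
    (1 - W.toBlocks₂₂ᴴ * W.toBlocks₂₂).PosSemidef := by
  have : 1 - W.toBlocks₂₂ᴴ * W.toBlocks₂₂ =
      (1 - Wᴴ * W).submatrix Sum.inr Sum.inr + W.toBlocks₁₂ᴴ * W.toBlocks₁₂ := by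
    ext i j
    simp [mul_apply, Fintype.sum_sum_type, toBlocks₂₂, toBlocks₁₂, one_apply]
    ring
  rw [this]
  exact (hW.submatrix _).add (posSemidef_conjTranspose_mul_self _)

end Blocks

section BlockNuclearNorm

variable {p q : Type*} [Fintype p] [Fintype q] [DecidableEq p] [DecidableEq q]

lemma nuclearNorm_add_le_nuclearNorm_fromBlocks (A : Matrix p p ℝ) (B : Matrix p q ℝ)
    (C : Matrix q p ℝ) (D : Matrix q q ℝ) :
    nuclearNorm A + nuclearNorm D ≤ nuclearNorm (fromBlocks A B C D) := by
  obtain ⟨WA, hWA, hA⟩ := exists_orthogonal_trace_eq_nuclearNorm A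
  obtain ⟨WD, hWD, hD⟩ := exists_orthogonal_trace_eq_nuclearNorm D
  have hW : (fromBlocks WA 0 0 WD)ᴴ * fromBlocks WA 0 0 WD = 1 := by
    rw [fromBlocks_conjTranspose, fromBlocks_multiply, hWA, hWD]
    simp
  calc nuclearNorm A + nuclearNorm D
        = ((fromBlocks WA 0 0 WD)ᴴ * fromBlocks A B C D).trace := by
        rw [trace_fromBlocks_conjTranspose_mul_fromBlocks, hA, hD]
        simp
    _ ≤ _ := trace_conjTranspose_mul_le_nuclearNorm _ _ (by rw [hW, sub_self]; exact .zero)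

lemma nuclearNorm_fromBlocks_zero_le (A : Matrix p p ℝ) (D : Matrix q q ℝ) :
    nuclearNorm (fromBlocks A 0 0 D) ≤ nuclearNorm A + nuclearNorm D := by
  obtain ⟨W, hW, hWX⟩ := exists_orthogonal_trace_eq_nuclearNorm (fromBlocks A 0 0 D)
  have hcontr : (1 - Wᴴ * W).PosSemidef := by rw [hW, sub_self]; exact .zero
  rw [← hWX, ← fromBlocks_toBlocks W, trace_fromBlocks_conjTranspose_mul_fromBlocks]
  simp only [Matrix.mul_zero, trace_zero, add_zero, zero_add]
  exact add_le_add
    (trace_conjTranspose_mul_le_nuclearNorm _ _ hcontr.one_sub_conjTranspose_mul_toBlocks₁₁)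
    (trace_conjTranspose_mul_le_nuclearNorm _ _ hcontr.one_sub_conjTranspose_mul_toBlocks₂₂)

lemma nuclearNorm_fromBlocks_zero (A : Matrix p p ℝ) (D : Matrix q q ℝ) :
    nuclearNorm (fromBlocks A 0 0 D) = nuclearNorm A + nuclearNorm D :=
  (nuclearNorm_fromBlocks_zero_le A D).antisymm
    (nuclearNorm_add_le_nuclearNorm_fromBlocks A 0 0 D)

end BlockNuclearNorm

theorem stmt2 {p q : ℕ} (A : Matrix (Fin p) (Fin p) ℝ) (B : Matrix (Fin p) (Fin q) ℝ)
    (C : Matrix (Fin q) (Fin p) ℝ) (D : Matrix (Fin q) (Fin q) ℝ) :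
    nuclearNorm (Matrix.fromBlocks A B C D) ≥ nuclearNorm (Matrix.fromBlocks A 0 0 D) ∧
    nuclearNorm (Matrix.fromBlocks A 0 0 D) = nuclearNorm A + nuclearNorm D :=
  ⟨(nuclearNorm_fromBlocks_zero A D).trans_le (nuclearNorm_add_le_nuclearNorm_fromBlocks A B C D),
    nuclearNorm_fromBlocks_zero A D⟩
end

section
/- Let Σ_r = diag(σ₁,…,σ_r) with σᵢ > 0, and μ > 0. Among all symmetric r×r matrices W̃, any minimizer of f(W̃) = (1/μ)‖W̃‖₊ + (1/2)‖W̃ − Σ_r‖_F² must be a diagonal matrix. -/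
open Matrix BigOperators

/-!
Let `p` separate `i` from `j`. Zeroing the entries of `W` that couple the blocks `{p}` and `{¬p}`
is the average of `W` and `S W Sᵀ`, where `S` is the diagonal sign matrix of `p`. For a symmetric
matrix the nuclear norm is `∑ |λₖ| = max tr (Q W)` over `Q = V diag(q) Vᵀ` with `V` orthogonal and
`|q| ≤ 1`, so averaging two orthogonal conjugates does not increase it. Since `Σ` is diagonal, the
same operation strictly decreases `‖W - Σ‖_F²` as soon as `W i j ≠ 0`, contradicting minimality.
-/

namespace Matrix

variable {n : Type*} [Fintype n] [DecidableEq n]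

namespace IsHermitian

variable {A : Matrix n n ℝ}

lemma eigenvectorUnitary_mul_transpose (hA : A.IsHermitian) :
    (hA.eigenvectorUnitary : Matrix n n ℝ) * (hA.eigenvectorUnitary : Matrix n n ℝ)ᵀ = 1 := by
  rw [← conjTranspose_eq_transpose_of_trivial, ← star_eq_conjTranspose]
  exact Unitary.coe_mul_star_self _

lemma eq_eigenvectorUnitary_mul_diagonal_mul_transpose (hA : A.IsHermitian) :
    A = hA.eigenvectorUnitary * diagonal hA.eigenvalues *
      (hA.eigenvectorUnitary : Matrix n n ℝ)ᵀ := by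
  conv_lhs => rw [hA.spectral_theorem, Unitary.conjStarAlgAut_apply]
  rw [star_eq_conjTranspose, conjTranspose_eq_transpose_of_trivial, RCLike.ofReal_real_eq_id]
  rfl

lemma nuclearNorm_eq_sum_abs_eigenvalues (hA : A.IsHermitian) :
    nuclearNorm A = ∑ i, |hA.eigenvalues i| := by
  have hAA : Aᴴ * A = cfc (fun x : ℝ => x ^ 2) A := by
    rw [hA.eq, cfc_pow_id A 2 hA.isSelfAdjoint, sq]
  have hroots : Finset.univ.val.map (isHermitian_conjTranspose_mul_self A).eigenvalues =
      Finset.univ.val.map (fun i => hA.eigenvalues i ^ 2) := by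
    have h : (Aᴴ * A).charpoly.roots = Finset.univ.val.map (fun i => hA.eigenvalues i ^ 2) := by
      rw [hAA, hA.charpoly_cfc_eq, Polynomial.roots_prod]
      · simp only [Polynomial.roots_X_sub_C, Multiset.bind_singleton]
        rfl
      · exact Finset.prod_ne_zero_iff.mpr fun _ _ => Polynomial.X_sub_C_ne_zero _
    rw [← h, (isHermitian_conjTranspose_mul_self A).roots_charpoly_eq_eigenvalues,
      RCLike.ofReal_real_eq_id]
    rfl
  have := congrArg (fun s => (s.map Real.sqrt).sum) hroots
  simpa [nuclearNorm, Multiset.map_map, Real.sqrt_sq_eq_abs] using this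

end IsHermitian

lemma trace_conj_diagonal_mul_conj_diagonal {R : Type*} [CommRing R] (V U : Matrix n n R)
    (q d : n → R) :
    trace (V * diagonal q * Vᵀ * (U * diagonal d * Uᵀ)) =
      ∑ k, (∑ j, q j * (Vᵀ * U) j k ^ 2) * d k := by
  have hcycle : trace (V * diagonal q * Vᵀ * (U * diagonal d * Uᵀ)) =
      trace ((Vᵀ * U)ᵀ * diagonal q * (Vᵀ * U) * diagonal d) := by
    rw [show V * diagonal q * Vᵀ * (U * diagonal d * Uᵀ) =
        V * diagonal q * Vᵀ * U * diagonal d * Uᵀ by simp only [Matrix.mul_assoc],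
      trace_mul_comm, transpose_mul, transpose_transpose]
    simp only [Matrix.mul_assoc]
  rw [hcycle, trace]
  generalize Vᵀ * U = P
  refine Finset.sum_congr rfl fun k _ => ?_
  rw [diag_apply, mul_diagonal, mul_apply]
  simp only [mul_diagonal, transpose_apply, Finset.sum_mul]
  refine Finset.sum_congr rfl fun j _ => ?_
  ring

lemma sum_sq_apply_eq_one_of_transpose_mul_eq_one {R : Type*} [CommRing R] {P : Matrix n n R}
    (hP : Pᵀ * P = 1) (k : n) : ∑ j, P j k ^ 2 = 1 := by
  simpa [mul_apply, sq] using congrFun (congrFun hP k) k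

lemma trace_conj_diagonal_mul_le {A : Matrix n n ℝ} (hA : A.IsHermitian) {V : Matrix n n ℝ}
    (hV : V * Vᵀ = 1) {q : n → ℝ} (hq : ∀ j, |q j| ≤ 1) :
    trace (V * diagonal q * Vᵀ * A) ≤ ∑ k, |hA.eigenvalues k| := by
  set U := (hA.eigenvectorUnitary : Matrix n n ℝ)
  have hP : (Vᵀ * U)ᵀ * (Vᵀ * U) = 1 := by
    rw [transpose_mul, transpose_transpose, Matrix.mul_assoc, ← Matrix.mul_assoc V, hV,
      Matrix.one_mul, mul_eq_one_comm.mp hA.eigenvectorUnitary_mul_transpose]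
  conv_lhs => rw [hA.eq_eigenvectorUnitary_mul_diagonal_mul_transpose]
  rw [trace_conj_diagonal_mul_conj_diagonal]
  refine Finset.sum_le_sum fun k _ => ?_
  have hweight : |∑ j, q j * (Vᵀ * U) j k ^ 2| ≤ 1 :=
    calc |∑ j, q j * (Vᵀ * U) j k ^ 2|
        ≤ ∑ j, |q j| * (Vᵀ * U) j k ^ 2 := by
          refine (Finset.abs_sum_le_sum_abs _ _).trans_eq ?_
          simp only [abs_mul, abs_pow, sq_abs]
      _ ≤ ∑ j, (Vᵀ * U) j k ^ 2 :=
          Finset.sum_le_sum fun j _ => mul_le_of_le_one_left (sq_nonneg _) (hq j)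
      _ = 1 := sum_sq_apply_eq_one_of_transpose_mul_eq_one hP k
  calc (∑ j, q j * (Vᵀ * U) j k ^ 2) * hA.eigenvalues k
      ≤ |∑ j, q j * (Vᵀ * U) j k ^ 2| * |hA.eigenvalues k| := by
        rw [← abs_mul]; exact le_abs_self _
    _ ≤ |hA.eigenvalues k| := mul_le_of_le_one_left (abs_nonneg _) hweight

lemma IsHermitian.exists_trace_conj_diagonal_mul_eq_sum_abs {A : Matrix n n ℝ}
    (hA : A.IsHermitian) :
    ∃ (V : Matrix n n ℝ) (q : n → ℝ), V * Vᵀ = 1 ∧ (∀ j, |q j| ≤ 1) ∧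
      trace (V * diagonal q * Vᵀ * A) = ∑ k, |hA.eigenvalues k| := by
  set U := (hA.eigenvectorUnitary : Matrix n n ℝ)
  refine ⟨U, fun k => SignType.sign (hA.eigenvalues k), hA.eigenvectorUnitary_mul_transpose,
    fun j => ?_, ?_⟩
  · rcases lt_trichotomy (hA.eigenvalues j) 0 with h | h | h <;> simp [h]
  · have h := trace_conj_diagonal_mul_conj_diagonal U U
      (fun k => SignType.sign (hA.eigenvalues k)) hA.eigenvalues
    rw [← hA.eq_eigenvectorUnitary_mul_diagonal_mul_transpose,
      mul_eq_one_comm.mp hA.eigenvectorUnitary_mul_transpose] at h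
    simpa [one_apply] using h

lemma nuclearNorm_half_smul_add_conj_le {W S : Matrix n n ℝ} (hW : W.IsHermitian)
    (hS : S * Sᵀ = 1) :
    nuclearNorm ((1 / 2 : ℝ) • (W + S * W * Sᵀ)) ≤ nuclearNorm W := by
  have hconj : (S * W * Sᵀ).IsHermitian := by
    simpa only [conjTranspose_eq_transpose_of_trivial] using
      isHermitian_mul_mul_conjTranspose S hW
  have hW' : ((1 / 2 : ℝ) • (W + S * W * Sᵀ)).IsHermitian :=
    (hW.add hconj).smul (IsSelfAdjoint.all _)
  obtain ⟨V, q, hV, hq, htr⟩ := hW'.exists_trace_conj_diagonal_mul_eq_sum_abs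
  have hSV : (Sᵀ * V) * (Sᵀ * V)ᵀ = 1 := by
    rw [transpose_mul, transpose_transpose, Matrix.mul_assoc, ← Matrix.mul_assoc V, hV,
      Matrix.one_mul, mul_eq_one_comm.mp hS]
  have hsplit : trace (V * diagonal q * Vᵀ * ((1 / 2 : ℝ) • (W + S * W * Sᵀ))) =
      (1 / 2 : ℝ) * (trace (V * diagonal q * Vᵀ * W) +
        trace (Sᵀ * V * diagonal q * (Sᵀ * V)ᵀ * W)) := by
    rw [Matrix.mul_smul, trace_smul, Matrix.mul_add, trace_add, smul_eq_mul,
      show V * diagonal q * Vᵀ * (S * W * Sᵀ) = (V * diagonal q * Vᵀ * S * W) * Sᵀ by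
        simp only [Matrix.mul_assoc],
      trace_mul_comm _ Sᵀ, transpose_mul, transpose_transpose]
    simp only [Matrix.mul_assoc]
  rw [hW'.nuclearNorm_eq_sum_abs_eigenvalues, ← htr, hsplit,
    hW.nuclearNorm_eq_sum_abs_eigenvalues]
  linarith [trace_conj_diagonal_mul_le hW hV hq, trace_conj_diagonal_mul_le hW hSV hq]

end Matrix

def blockPinch {n α : Type*} [Zero α] (p : n → Prop) [DecidablePred p] (A : Matrix n n α) :
    Matrix n n α :=
  Matrix.of fun a b => if (p a ↔ p b) then A a b else 0

section blockPinch

variable {n : Type*} (p : n → Prop) [DecidablePred p]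

lemma blockPinch_transpose {α : Type*} [Zero α] (A : Matrix n n α) :
    (blockPinch p A)ᵀ = blockPinch p Aᵀ := by
  ext a b
  simp [blockPinch, iff_comm]

lemma blockPinch_sub_diagonal {α : Type*} [AddGroup α] [DecidableEq n] (A : Matrix n n α)
    (d : n → α) : blockPinch p (A - diagonal d) = blockPinch p A - diagonal d := by
  ext a b
  by_cases hab : a = b
  · subst hab; simp [blockPinch]
  · by_cases h : (p a ↔ p b) <;> simp [blockPinch, h, hab]

lemma frobSq_blockPinch_lt [Fintype n] {A : Matrix n n ℝ} {i j : n} (hij : ¬(p i ↔ p j))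
    (hA : A i j ≠ 0) : frobSq (blockPinch p A) < frobSq A := by
  have hle : ∀ a b, blockPinch p A a b ^ 2 ≤ A a b ^ 2 := fun a b => by
    by_cases h : (p a ↔ p b) <;> simp [blockPinch, h, sq_nonneg]
  have hlt : blockPinch p A i j ^ 2 < A i j ^ 2 := by
    simpa [blockPinch, hij] using sq_pos_of_ne_zero hA
  exact Finset.sum_lt_sum (fun a _ => Finset.sum_le_sum fun b _ => hle a b)
    ⟨i, Finset.mem_univ _, Finset.sum_lt_sum (fun b _ => hle i b) ⟨j, Finset.mem_univ _, hlt⟩⟩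

lemma blockPinch_eq_half_smul_add_conj [Fintype n] [DecidableEq n] (A : Matrix n n ℝ) :
    blockPinch p A = (1 / 2 : ℝ) • (A + diagonal (fun a => if p a then -1 else 1) * A *
      (diagonal (fun a => if p a then -1 else 1))ᵀ) := by
  ext a b
  by_cases ha : p a <;> by_cases hb : p b <;>
    simp [blockPinch, diagonal_mul, mul_diagonal, ha, hb] <;> ring

lemma nuclearNorm_blockPinch_le [Fintype n] [DecidableEq n] {A : Matrix n n ℝ}
    (hA : A.IsHermitian) : nuclearNorm (blockPinch p A) ≤ nuclearNorm A := by
  rw [blockPinch_eq_half_smul_add_conj]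
  refine Matrix.nuclearNorm_half_smul_add_conj_le hA ?_
  rw [diagonal_transpose, diagonal_mul_diagonal, ← diagonal_one]
  congr 1
  ext a
  split_ifs <;> norm_num

end blockPinch

theorem stmt10_general {r : ℕ} (σ : Fin r → ℝ) (μ : ℝ) (hμ : 0 < μ)
    (W : Matrix (Fin r) (Fin r) ℝ) (hWsym : Wᵀ = W)
    (hmin : ∀ W' : Matrix (Fin r) (Fin r) ℝ, W'ᵀ = W' →
      (1 / μ) * nuclearNorm W + (1 / 2) * frobSq (W - Matrix.diagonal σ) ≤
        (1 / μ) * nuclearNorm W' + (1 / 2) * frobSq (W' - Matrix.diagonal σ)) :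
    ∀ i j, i ≠ j → W i j = 0 := by
  intro i j hij
  by_contra hWij
  have hsep : ¬(i = j ↔ j = j) := by simpa using hij
  have hnuc : nuclearNorm (blockPinch (· = j) W) ≤ nuclearNorm W :=
    nuclearNorm_blockPinch_le _ (isHermitian_iff_isSymm.mpr hWsym)
  have hfrob : frobSq (blockPinch (· = j) W - diagonal σ) < frobSq (W - diagonal σ) := by
    rw [← blockPinch_sub_diagonal]
    exact frobSq_blockPinch_lt _ hsep (by simpa [hij] using hWij)
  have hW'sym : (blockPinch (· = j) W)ᵀ = blockPinch (· = j) W := by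
    rw [blockPinch_transpose, hWsym]
  have hnuc' := mul_le_mul_of_nonneg_left hnuc (one_div_pos.mpr hμ).le
  linarith [hmin _ hW'sym]

theorem stmt10 {r : ℕ} (σ : Fin r → ℝ) (hσ : ∀ i, 0 < σ i) (μ : ℝ) (hμ : 0 < μ)
    (W : Matrix (Fin r) (Fin r) ℝ) (hWsym : Wᵀ = W)
    (hmin : ∀ W' : Matrix (Fin r) (Fin r) ℝ, W'ᵀ = W' →
      (1 / μ) * nuclearNorm W + (1 / 2) * frobSq (W - Matrix.diagonal σ) ≤
        (1 / μ) * nuclearNorm W' + (1 / 2) * frobSq (W' - Matrix.diagonal σ)) :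
    ∀ i j, i ≠ j → W i j = 0 :=
  stmt10_general σ μ hμ W hWsym hmin
end

section
/- Let Q̃ ∈ ℝ^{n×n} be symmetric with SVD Q̃ = UΣVᵀ, and μ > 0. Then W* = U_r(Σ_r − (1/μ)I_r)V_rᵀ, where Σ_r retains the singular values exceeding 1/μ and U_r, V_r the corresponding singular vectors, is the unique minimizer of (1/μ)‖W‖₊ + (1/2)‖W − Q̃‖_F² over all symmetric matrices W, and moreover W* is symmetric. -/
/-!
The residual `G = Q̃ - W* = U diag(min(σᵢ, 1/μ)) Vᵀ` certifies optimality: `⟨G, W*⟩ = ‖W*‖₊/μ`,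
while `⟨G, W⟩ ≤ ‖W‖₊/μ` for every symmetric `W`, by diagonalising `W = P diag(λ) Pᵀ` orthogonally
and bounding each `⟨G, pⱼpⱼᵀ⟩` by `1/μ` with AM-GM on the columns of `UᵀP` and `VᵀP`. So `μG` is a
subgradient of the nuclear norm at `W*`, and expanding the square shows that the objective at `W`
exceeds its value at `W*` by at least `½‖W - W*‖_F²`.

`W*` is symmetric because it equals `Q̃ p(Q̃²)` for a polynomial `p` with
`σᵢ p(σᵢ²) = max(σᵢ - 1/μ, 0)`, and `p(Q̃²)` is symmetric and commutes with `Q̃`.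
-/

open Matrix BigOperators

open Polynomial

lemma exists_mul_eval_sq_eq {ι : Type*} [Fintype ι] (σ : ι → ℝ) (hσ : ∀ i, 0 ≤ σ i)
    (φ : ℝ → ℝ) (hφ : φ 0 = 0) : ∃ p : ℝ[X], ∀ i, σ i * p.eval (σ i ^ 2) = φ (σ i) := by
  refine ⟨Lagrange.interpolate (Finset.univ.image fun i => σ i ^ 2) id
    (fun x => φ (√x) / √x), fun i => ?_⟩
  have hnode := Lagrange.eval_interpolate_at_node (fun x => φ (√x) / √x) (Set.injOn_id _)
    (Finset.mem_image_of_mem (fun i => σ i ^ 2) (Finset.mem_univ i))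
  rw [id, Real.sqrt_sq (hσ i)] at hnode
  rw [hnode]
  rcases eq_or_ne (σ i) 0 with h | h
  · simp [h, hφ]
  · exact mul_div_cancel₀ _ h

lemma abs_sub_max_sub_zero_le {s t : ℝ} (hs : 0 ≤ s) (ht : 0 ≤ t) : |s - max (s - t) 0| ≤ t := by
  rcases max_cases (s - t) 0 with ⟨h, _⟩ | ⟨h, _⟩ <;> rw [h, abs_le] <;> constructor <;> linarith

lemma sub_max_sub_zero_mul (s t : ℝ) :
    (s - max (s - t) 0) * max (s - t) 0 = t * max (s - t) 0 := by
  rcases max_cases (s - t) 0 with ⟨h, _⟩ | ⟨h, _⟩ <;> rw [h] <;> ring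

namespace Matrix

lemma trace_transpose_mul_comm {m n : Type*} [Fintype m] [Fintype n] (A B : Matrix m n ℝ) :
    (Aᵀ * B).trace = (Bᵀ * A).trace := by
  rw [← trace_transpose, transpose_mul, transpose_transpose]

variable {ι : Type*} [Fintype ι] [DecidableEq ι]

section CommRing

variable {R : Type*} [CommRing R]

lemma charpoly_conj_diagonal {P : Matrix ι ι R} (hP : Pᵀ * P = 1) (e : ι → R) :
    (P * diagonal e * Pᵀ).charpoly = ∏ i, (X - C (e i)) := by
  rw [charpoly_mul_comm, ← Matrix.mul_assoc, hP, Matrix.one_mul, charpoly_diagonal]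

lemma transpose_mul_self_conj_diagonal {U : Matrix ι ι R} (hU : Uᵀ * U = 1) (V : Matrix ι ι R)
    (s : ι → R) :
    (U * diagonal s * Vᵀ)ᵀ * (U * diagonal s * Vᵀ) = V * diagonal (fun i => s i ^ 2) * Vᵀ := by
  simp only [transpose_mul, transpose_transpose, diagonal_transpose, Matrix.mul_assoc]
  rw [← Matrix.mul_assoc Uᵀ U, hU, Matrix.one_mul, ← Matrix.mul_assoc (diagonal s),
    diagonal_mul_diagonal]
  simp only [sq]

lemma transpose_mul_orthogonal {U P : Matrix ι ι R} (hU : Uᵀ * U = 1) (hP : Pᵀ * P = 1) :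
    (Uᵀ * P)ᵀ * (Uᵀ * P) = 1 := by
  rw [transpose_mul, transpose_transpose, Matrix.mul_assoc, ← Matrix.mul_assoc U,
    mul_eq_one_comm.mp hU, Matrix.one_mul, hP]

lemma trace_conj_diagonal_transpose_mul (U V P Q : Matrix ι ι R) (c e : ι → R) :
    ((U * diagonal c * Vᵀ)ᵀ * (P * diagonal e * Qᵀ)).trace =
      ∑ i, ∑ j, c i * e j * (Uᵀ * P) i j * (Vᵀ * Q) i j := by
  have hcycle : ((U * diagonal c * Vᵀ)ᵀ * (P * diagonal e * Qᵀ)).trace =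
      (diagonal c * (Uᵀ * P) * diagonal e * (Qᵀ * V)).trace := by
    simp only [transpose_mul, transpose_transpose, diagonal_transpose, Matrix.mul_assoc]
    rw [trace_mul_comm]
    simp only [Matrix.mul_assoc]
  have hVQ : Vᵀ * Q = (Qᵀ * V)ᵀ := by rw [transpose_mul, transpose_transpose]
  rw [hcycle, hVQ]
  simp only [trace, diag_apply, mul_apply (N := Qᵀ * V), mul_diagonal, diagonal_mul,
    transpose_apply]
  exact Finset.sum_congr rfl fun i _ => Finset.sum_congr rfl fun j _ => by ring

lemma trace_conj_diagonal_transpose_mul_self {U V : Matrix ι ι R} (hU : Uᵀ * U = 1)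
    (hV : Vᵀ * V = 1) (c e : ι → R) :
    ((U * diagonal c * Vᵀ)ᵀ * (U * diagonal e * Vᵀ)).trace = ∑ i, c i * e i := by
  rw [trace_conj_diagonal_transpose_mul, hU, hV]
  simp [one_apply]

lemma commute_aeval_mul_self (A : Matrix ι ι R) (p : R[X]) : Commute A (aeval (A * A) p) := by
  have h := (Commute.all X (p.comp (X * X))).map (aeval A)
  rwa [aeval_X, aeval_comp, map_mul, aeval_X] at h

end CommRing

lemma IsSymm.exists_orthogonal_diagonal {B : Matrix ι ι ℝ} (hB : B.IsSymm) :
    ∃ (P : Matrix ι ι ℝ) (e : ι → ℝ), Pᵀ * P = 1 ∧ B = P * diagonal e * Pᵀ := by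
  have hH : B.IsHermitian := by
    rw [IsHermitian, conjTranspose_eq_transpose_of_trivial]
    exact hB
  refine ⟨hH.eigenvectorUnitary, hH.eigenvalues, ?_, ?_⟩
  · simpa [star_eq_conjTranspose] using mem_unitaryGroup_iff'.mp hH.eigenvectorUnitary.2
  · simpa [star_eq_conjTranspose] using hH.spectral_theorem

lemma IsHermitian.sum_comp_eigenvalues_eq {B : Matrix ι ι ℝ} (hB : B.IsHermitian)
    {P : Matrix ι ι ℝ} (hP : Pᵀ * P = 1) {e : ι → ℝ} (hBe : B = P * diagonal e * Pᵀ)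
    (g : ℝ → ℝ) : ∑ i, g (hB.eigenvalues i) = ∑ i, g (e i) := by
  have hroots : Finset.univ.val.map hB.eigenvalues = Finset.univ.val.map e := by
    have hcharpoly : B.charpoly = ∏ i, (X - C (e i)) := hBe ▸ charpoly_conj_diagonal hP e
    have h := hB.roots_charpoly_eq_eigenvalues
    rw [hcharpoly, roots_prod] at h
    · simpa using h.symm
    · simp [Finset.prod_ne_zero_iff, X_sub_C_ne_zero]
  simpa [Multiset.map_map] using congrArg (fun s => (s.map g).sum) hroots

lemma nuclearNorm_conj_diagonal {U V : Matrix ι ι ℝ} (hU : Uᵀ * U = 1) (hV : Vᵀ * V = 1)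
    (s : ι → ℝ) : nuclearNorm (U * diagonal s * Vᵀ) = ∑ i, |s i| := by
  rw [nuclearNorm, IsHermitian.sum_comp_eigenvalues_eq _ hV
    (by rw [conjTranspose_eq_transpose_of_trivial, transpose_mul_self_conj_diagonal hU])]
  simp [Real.sqrt_sq_eq_abs]

lemma sum_sq_apply_eq_one {A : Matrix ι ι ℝ} (hA : Aᵀ * A = 1) (j : ι) : ∑ i, A i j ^ 2 = 1 := by
  simpa [mul_apply, sq] using congrFun (congrFun hA j) j

lemma abs_sum_mul_mul_apply_le {A B : Matrix ι ι ℝ} (hA : Aᵀ * A = 1) (hB : Bᵀ * B = 1)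
    {m : ι → ℝ} {κ : ℝ} (hm : ∀ i, |m i| ≤ κ) (j : ι) : |∑ i, m i * A i j * B i j| ≤ κ := by
  have hκ : 0 ≤ κ := (abs_nonneg _).trans (hm j)
  calc |∑ i, m i * A i j * B i j|
      ≤ ∑ i, κ * ((A i j ^ 2 + B i j ^ 2) / 2) := by
        refine (Finset.abs_sum_le_sum_abs _ _).trans (Finset.sum_le_sum fun i _ => ?_)
        have hamgm : |A i j| * |B i j| ≤ (A i j ^ 2 + B i j ^ 2) / 2 := by
          nlinarith [sq_nonneg (|A i j| - |B i j|), sq_abs (A i j), sq_abs (B i j)]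
        rw [abs_mul, abs_mul, mul_assoc]
        exact mul_le_mul (hm i) hamgm (by positivity) hκ
    _ = κ := by
        rw [← Finset.mul_sum, ← Finset.sum_div, Finset.sum_add_distrib, sum_sq_apply_eq_one hA,
          sum_sq_apply_eq_one hB]
        ring

lemma trace_conj_diagonal_transpose_mul_le {U V P : Matrix ι ι ℝ} (hU : Uᵀ * U = 1)
    (hV : Vᵀ * V = 1) (hP : Pᵀ * P = 1) {m : ι → ℝ} {κ : ℝ} (hm : ∀ i, |m i| ≤ κ) (l : ι → ℝ) :
    ((U * diagonal m * Vᵀ)ᵀ * (P * diagonal l * Pᵀ)).trace ≤ κ * ∑ j, |l j| := by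
  rw [trace_conj_diagonal_transpose_mul, Finset.sum_comm, Finset.mul_sum]
  refine Finset.sum_le_sum fun j _ => ?_
  calc ∑ i, m i * l j * (Uᵀ * P) i j * (Vᵀ * P) i j
      = l j * ∑ i, m i * (Uᵀ * P) i j * (Vᵀ * P) i j := by
        rw [Finset.mul_sum]
        exact Finset.sum_congr rfl fun i _ => by ring
    _ ≤ |l j| * κ := by
        refine (le_abs_self _).trans ?_
        rw [abs_mul]
        exact mul_le_mul_of_nonneg_left (abs_sum_mul_mul_apply_le (transpose_mul_orthogonal hU hP)
          (transpose_mul_orthogonal hV hP) hm j) (abs_nonneg _)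
    _ = κ * |l j| := mul_comm _ _

lemma aeval_conj_diagonal {P : Matrix ι ι ℝ} (hP : Pᵀ * P = 1) (d : ι → ℝ) (p : ℝ[X]) :
    aeval (P * diagonal d * Pᵀ) p = P * diagonal (fun i => p.eval (d i)) * Pᵀ := by
  let u : unitary (Matrix ι ι ℝ) :=
    ⟨P, mem_unitaryGroup_iff'.mpr (by simpa [star_eq_conjTranspose] using hP)⟩
  have hconj := aeval_algHom_apply (Unitary.conjStarAlgAut ℝ _ u) (diagonal d) p
  have hdiag := aeval_algHom_apply (diagonalAlgHom ℝ) d p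
  simp only [diagonalAlgHom_apply, aeval_pi_apply] at hdiag
  simpa [u, star_eq_conjTranspose, hdiag] using hconj

lemma IsSymm.conj_diagonal_comp {Q U V : Matrix ι ι ℝ} (hQ : Q.IsSymm) (hU : Uᵀ * U = 1)
    (hV : Vᵀ * V = 1) {σ : ι → ℝ} (hσ : ∀ i, 0 ≤ σ i) (hQσ : Q = U * diagonal σ * Vᵀ)
    {φ : ℝ → ℝ} (hφ : φ 0 = 0) : (U * diagonal (fun i => φ (σ i)) * Vᵀ).IsSymm := by
  obtain ⟨p, hp⟩ := exists_mul_eval_sq_eq σ hσ φ hφ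
  set M := V * diagonal (fun i => p.eval (σ i ^ 2)) * Vᵀ with hMdef
  have hM : aeval (Q * Q) p = M := by
    rw [show Q * Q = Qᵀ * Q by rw [hQ.eq], hQσ, transpose_mul_self_conj_diagonal hU,
      aeval_conj_diagonal hV]
  have hMsymm : Mᵀ = M := by simp [hMdef, transpose_mul, Matrix.mul_assoc]
  have hQM : U * diagonal (fun i => φ (σ i)) * Vᵀ = Q * M := by
    rw [hQσ, hMdef]
    simp only [Matrix.mul_assoc]
    rw [← Matrix.mul_assoc Vᵀ V, hV, Matrix.one_mul, ← Matrix.mul_assoc (diagonal σ),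
      diagonal_mul_diagonal]
    simp only [hp]
  rw [IsSymm, hQM, transpose_mul, hQ.eq, hMsymm, ← hM, (commute_aeval_mul_self Q p).eq]

end Matrix

section Frobenius

variable {m n : Type*} [Fintype m] [Fintype n]

lemma frobSq_eq_trace (A : Matrix m n ℝ) : frobSq A = (Aᵀ * A).trace := by
  rw [frobSq, Finset.sum_comm]
  simp [trace, mul_apply, sq]

lemma frobSq_pos {A : Matrix m n ℝ} (hA : A ≠ 0) : 0 < frobSq A := by
  have hne : (Aᴴ * A).trace ≠ 0 := trace_conjTranspose_mul_self_eq_zero_iff.not.mpr hA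
  rw [conjTranspose_eq_transpose_of_trivial, ← frobSq_eq_trace] at hne
  exact (Finset.sum_nonneg fun i _ => Finset.sum_nonneg fun j _ => sq_nonneg (A i j)).lt_of_ne'
    hne

lemma frobSq_add (A B : Matrix m n ℝ) :
    frobSq (A + B) = frobSq A + frobSq B + 2 * (Aᵀ * B).trace := by
  simp only [frobSq_eq_trace, transpose_add, Matrix.add_mul, Matrix.mul_add, trace_add]
  rw [trace_transpose_mul_comm B A]
  ring

lemma objective_lt_of_subgradient (N : Matrix m n ℝ → ℝ) {c : ℝ} {Q W W' : Matrix m n ℝ}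
    (hW' : ((Q - W')ᵀ * W').trace = c * N W') (hW : ((Q - W')ᵀ * W).trace ≤ c * N W)
    (hne : W ≠ W') :
    c * N W' + 1 / 2 * frobSq (W' - Q) < c * N W + 1 / 2 * frobSq (W - Q) := by
  have hexp : frobSq (W - Q) = frobSq (W - W') + frobSq (W' - Q)
      + 2 * (((Q - W')ᵀ * W').trace - ((Q - W')ᵀ * W).trace) := by
    rw [show W - Q = (W - W') + (W' - Q) by abel, frobSq_add, trace_transpose_mul_comm,
      show W' - Q = -(Q - W') by abel]
    simp only [frobSq_eq_trace, transpose_neg, Matrix.neg_mul, Matrix.mul_neg, Matrix.mul_sub,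
      trace_neg, trace_sub]
    ring
  have hpos := frobSq_pos (sub_ne_zero.mpr hne)
  rw [hexp]
  linarith

end Frobenius

theorem stmt12 {n : ℕ} (Qt : Matrix (Fin n) (Fin n) ℝ) (hQt : Qtᵀ = Qt)
    (μ : ℝ) (hμ : 0 < μ)
    (U V : Matrix (Fin n) (Fin n) ℝ) (σ : Fin n → ℝ)
    (hU : Uᵀ * U = 1) (hV : Vᵀ * V = 1) (hσ : ∀ i, 0 ≤ σ i)
    (hSVD : Qt = U * Matrix.diagonal σ * Vᵀ)
    (Wstar : Matrix (Fin n) (Fin n) ℝ)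
    (hWstar : Wstar = U * Matrix.diagonal (fun i => max (σ i - 1 / μ) 0) * Vᵀ) :
    Wstarᵀ = Wstar ∧
      ∀ W : Matrix (Fin n) (Fin n) ℝ, Wᵀ = W → W ≠ Wstar →
        (1 / μ) * nuclearNorm Wstar + (1 / 2) * frobSq (Wstar - Qt) <
          (1 / μ) * nuclearNorm W + (1 / 2) * frobSq (W - Qt) := by
  refine ⟨?_, fun W hW hne => ?_⟩
  · rw [hWstar]
    exact IsSymm.conj_diagonal_comp hQt hU hV hσ hSVD (φ := fun s => max (s - 1 / μ) 0)
      (by simp [hμ.le])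
  have hG : Qt - Wstar = U * diagonal (fun i => σ i - max (σ i - 1 / μ) 0) * Vᵀ := by
    rw [hSVD, hWstar, ← Matrix.sub_mul, ← Matrix.mul_sub, diagonal_sub]
  obtain ⟨P, l, hP, rfl⟩ := IsSymm.exists_orthogonal_diagonal hW
  refine objective_lt_of_subgradient nuclearNorm ?_ ?_ hne
  · rw [hG, hWstar, trace_conj_diagonal_transpose_mul_self hU hV, nuclearNorm_conj_diagonal hU hV,
      Finset.mul_sum]
    exact Finset.sum_congr rfl fun i _ => by
      rw [sub_max_sub_zero_mul, abs_of_nonneg (le_max_right _ _)]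
  · rw [hG, nuclearNorm_conj_diagonal hP hP]
    exact trace_conj_diagonal_transpose_mul_le hU hV hP
      (fun i => abs_sub_max_sub_zero_le (hσ i) (by positivity)) l
end
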